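/- Let V = {V(n)} be a planar operad in abelian groups and define x ∘ y = Σ_{i=0}^{m-1} (-1)^{(n+1)i} x∘ᵢy for x ∈ V(m), y ∈ V(n), and [x,y] = x∘y − (−1)^{(m−1)(n−1)} y∘x. Then the graded abelian group ⊕ₙ V(n), with V(n) placed in degree n+1, equipped with [,] is a graded Lie algebra; in particular [x,y] = −(−1)^{(m−1)(n−1)}[y,x] and the graded Jacobi identity holds. -/
import Mathlib


/-- Transport an element of a graded family along an equality of indices. -/
def cst {V : ℕ → Type} {m n : ℕ} (h : m = n) (x : V m) : V n := h ▸ x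

/-- Transport an element of a graded family of abelian groups along an
(alleged) equality of indices; it is the transport when the indices agree,
and `0` otherwise. -/
def tr {V : ℕ → Type} [∀ n, AddCommGroup (V n)] (m n : ℕ) (x : V m) : V n :=
  if h : m = n then h ▸ x else 0

/-- The sign `(−1)^{(a−1)(b−1)}` (computed in `ℤ`, so that it is correct also
when `a = 0` or `b = 0`). -/
def jsgn (a b : ℕ) : ℤ := (-1) ^ ((((a : ℤ) - 1) * ((b : ℤ) - 1)).natAbs)

/-- A planar operad in the category of abelian groups: each `V(n)` is an
abelian group, the insertions `∘ᵢ : V(m) ⊗ V(n) → V(m+n-1)` are biadditive and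
satisfy the standard pre-Lie system identities. -/
structure AddPlanarOperad (V : ℕ → Type) [∀ n, AddCommGroup (V n)] where
  one : V 1
  ins : ∀ {m n : ℕ}, V m → ℕ → V n → V (m + n - 1)
  ins_add_left : ∀ {m n : ℕ} (x x' : V m) (j : ℕ) (y : V n),
    ins (x + x') j y = ins x j y + ins x' j y
  ins_add_right : ∀ {m n : ℕ} (x : V m) (j : ℕ) (y y' : V n),
    ins x j (y + y') = ins x j y + ins x j y'
  unit_left : ∀ {n : ℕ} (x : V n), ins one 0 x = cst (by omega) x
  unit_right : ∀ {n : ℕ} (x : V n) (j : ℕ) (hj : j < n), ins x j one = cst (by omega) x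
  assoc_nested : ∀ {m n k : ℕ} (x : V m) (y : V n) (z : V k) (i j : ℕ)
    (hi : i < m) (hj : j < n),
    ins (ins x i y) (i + j) z = cst (by omega) (ins x i (ins y j z))
  assoc_disjoint : ∀ {m n k : ℕ} (x : V m) (y : V n) (z : V k) (i j : ℕ)
    (hj : j < i) (hi : i < m),
    ins (ins x i y) j z = cst (by omega) (ins (ins x j z) (i + k - 1) y)

namespace AddPlanarOperad

variable {V : ℕ → Type} [∀ n, AddCommGroup (V n)] (P : AddPlanarOperad V)

/-- Gerstenhaber's circle product
`x ∘ y = Σ_{i=0}^{m-1} (−1)^{(n+1)i} x∘ᵢy` for `x ∈ V(m)`, `y ∈ V(n)`. -/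
def circ {m n : ℕ} (x : V m) (y : V n) : V (m + n - 1) :=
  ∑ i ∈ Finset.range m, ((-1 : ℤ) ^ ((n + 1) * i)) • P.ins x i y

/-- The bracket `[x, y] = x∘y − (−1)^{(m−1)(n−1)} y∘x`. -/
def gbr {m n : ℕ} (x : V m) (y : V n) : V (m + n - 1) :=
  P.circ x y - jsgn m n • cst (by omega) (P.circ y x)

end AddPlanarOperad

/-- An operad with multiplication in abelian groups. -/
structure AddOperadWithMult (V : ℕ → Type) [∀ n, AddCommGroup (V n)]
    extends AddPlanarOperad V where
  e : V 0
  mu : V 2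
  mu_mu : ins mu 0 mu = ins mu 1 mu
  mu_e0 : ins mu 0 e = one
  mu_e1 : ins mu 1 e = one

namespace AddOperadWithMult

variable {V : ℕ → Type} [∀ n, AddCommGroup (V n)] (P : AddOperadWithMult V)

/-- The cofaces `d⁰(x) = μ∘₁x`, `dⁱ(x) = x∘_{i-1}μ` for `1 ≤ i ≤ n`,
`d^{n+1}(x) = μ∘₀x` on `V(n)`. -/
def coface {n : ℕ} (i : ℕ) (x : V n) : V (n + 1) :=
  if i = 0 then cst (by omega) (P.ins P.mu 1 x)
  else if i = n + 1 then cst (by omega) (P.ins P.mu 0 x)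
  else P.ins x (i - 1) P.mu

/-- The codegeneracies `sⁱ(x) = x∘ᵢe` on `V(n)`. -/
def codeg {n : ℕ} (i : ℕ) (x : V n) : V (n - 1) := P.ins x i P.e

/-- The product `x·y := γ(μ; x, y)`. -/
def omul {m n : ℕ} (x : V m) (y : V n) : V (m + n) :=
  cst (by omega) (P.ins (cst (show 2 + n - 1 = n + 1 by omega) (P.ins P.mu 1 y)) 0 x)

/-- The distinguished elements `eₙ ∈ V(n)`, images of the associative operad. -/
def unitEl : ∀ n : ℕ, V n
  | 0 => P.e
  | 1 => P.one
  | n + 2 => cst (by omega) (P.ins P.mu 1 (unitEl (n + 1)))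

/-- The differential `d = Σ_{i=0}^{n+1} (−1)ⁱ dⁱ`. -/
def D {n : ℕ} (x : V n) : V (n + 1) :=
  ∑ i ∈ Finset.range (n + 2), ((-1 : ℤ) ^ i) • P.coface i x

/-- The degeneracy operator `s = Σ_{i=0}^{n-1} (−1)ⁱ sⁱ`. -/
def S {n : ℕ} (x : V n) : V (n - 1) :=
  ∑ i ∈ Finset.range n, ((-1 : ℤ) ^ i) • P.codeg i x

end AddOperadWithMult


section Base

variable {V : ℕ → Type} [∀ n, AddCommGroup (V n)]

theorem negpow_congr {a b : ℕ} (h : a % 2 = b % 2) : ((-1:ℤ))^a = (-1)^b := by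
  rcases Nat.even_or_odd a with ha|ha <;> rcases Nat.even_or_odd b with hb|hb <;>
    simp [Nat.even_iff, Nat.odd_iff] at ha hb <;>
    first
      | omega
      | simp [Nat.even_iff, Nat.odd_iff, Even.neg_one_pow, Odd.neg_one_pow, ha, hb,
          (Nat.even_iff).2, (Nat.odd_iff).2]

theorem jsgn_eq_ite (a b : ℕ) :
    jsgn a b = if Even (((a:ℤ)-1) * ((b:ℤ)-1)) then 1 else -1 := by
  unfold jsgn
  rcases Int.even_or_odd (((a:ℤ)-1) * ((b:ℤ)-1)) with h|h
  · rw [if_pos h, Even.neg_one_pow (Int.natAbs_even.2 h)]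
  · rw [if_neg (Int.not_even_iff_odd.2 h), Odd.neg_one_pow (Int.natAbs_odd.2 h)]

theorem jsgn_comm (a b : ℕ) : jsgn a b = jsgn b a := by
  rw [jsgn_eq_ite, jsgn_eq_ite, mul_comm]

theorem jsgn_mul_self (a b : ℕ) : jsgn a b * jsgn a b = 1 := by
  rw [jsgn_eq_ite]; split <;> norm_num

/-- generic sign juggling: `jsgn a b * jsgn c d = jsgn p q` given a parity fact. -/
theorem jsgn_mul_jsgn {a b c d p q : ℕ}
    (h : Even (((a:ℤ)-1)*((b:ℤ)-1) + ((c:ℤ)-1)*((d:ℤ)-1) - ((p:ℤ)-1)*((q:ℤ)-1))) :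
    jsgn a b * jsgn c d = jsgn p q := by
  rw [jsgn_eq_ite, jsgn_eq_ite, jsgn_eq_ite]
  rw [Int.even_sub, Int.even_add] at h
  split_ifs with h1 h2 h3 <;> norm_num <;> tauto

/-- `(-1)^P = jsgn n k * (-1)^Q` given a parity fact. -/
theorem negpow_eq_jsgn_mul {P Q n k : ℕ}
    (h : Even ((P:ℤ) + (((n:ℤ)-1)*((k:ℤ)-1)) + Q)) :
    ((-1:ℤ))^P = jsgn n k * (-1)^Q := by
  rw [jsgn_eq_ite]
  rw [Int.even_add, Int.even_add, Int.even_coe_nat, Int.even_coe_nat] at h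
  by_cases hM : Even (((n:ℤ)-1) * ((k:ℤ)-1))
  · rw [if_pos hM, one_mul]
    apply negpow_congr
    rcases Nat.even_or_odd P with h1|h1 <;> rcases Nat.even_or_odd Q with h2|h2 <;>
      simp [Nat.even_iff, Nat.odd_iff] at h1 h2 <;>
      first | omega | (exfalso; simp [hM, Nat.even_iff] at h; omega)
  · rw [if_neg hM, neg_one_mul, show -((-1:ℤ))^Q = (-1)^(Q+1) by rw [pow_succ]; ring]
    apply negpow_congr
    rcases Nat.even_or_odd P with h1|h1 <;> rcases Nat.even_or_odd Q with h2|h2 <;>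
      simp [Nat.even_iff, Nat.odd_iff] at h1 h2 <;>
      first | omega | (exfalso; simp [hM, Nat.even_iff] at h; omega)

@[simp] theorem cst_rfl {m : ℕ} (h : m = m) (x : V m) : cst h x = x := rfl

theorem cst_cst {a b c : ℕ} (h1 : a = b) (h2 : b = c) (x : V a) :
    cst h2 (cst h1 x) = cst (h1.trans h2) x := by subst h1; rfl

@[simp] theorem cst_add {a b : ℕ} (h : a = b) (x y : V a) :
    cst h (x + y) = cst h x + cst h y := by subst h; rfl

@[simp] theorem cst_sub {a b : ℕ} (h : a = b) (x y : V a) :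
    cst h (x - y) = cst h x - cst h y := by subst h; rfl

@[simp] theorem cst_neg {a b : ℕ} (h : a = b) (x : V a) :
    cst h (-x) = -cst h x := by subst h; rfl

@[simp] theorem cst_zero {a b : ℕ} (h : a = b) :
    cst h (0 : V a) = 0 := by subst h; rfl

@[simp] theorem cst_zsmul {a b : ℕ} (h : a = b) (c : ℤ) (x : V a) :
    cst h (c • x) = c • cst h x := by subst h; rfl

theorem cst_sum {a b : ℕ} (h : a = b) {ι : Type*} (s : Finset ι) (f : ι → V a) :
    cst h (∑ i ∈ s, f i) = ∑ i ∈ s, cst h (f i) := by subst h; rfl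

theorem tr_eq_cst {a b : ℕ} (h : a = b) (x : V a) : tr a b x = cst h x := by
  subst h; simp [tr, cst]

theorem tr_eq_zero {a b : ℕ} (h : ¬ a = b) (x : V a) : tr a b x = 0 := dif_neg h

@[simp] theorem tr_self {a : ℕ} (x : V a) : tr a a x = x := by rw [tr_eq_cst rfl]; rfl

theorem tr_cst {a b c : ℕ} (h : a = b) (x : V a) :
    tr b c (cst h x) = tr a c x := by subst h; rfl

@[simp] theorem tr_add {a b : ℕ} (x y : V a) : tr a b (x + y) = tr a b x + tr a b y := by
  by_cases h : a = b
  · subst h; simp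
  · simp [tr_eq_zero h]

@[simp] theorem tr_zero {a b : ℕ} : tr a b (0 : V a) = 0 := by
  by_cases h : a = b
  · subst h; simp
  · simp [tr_eq_zero h]

@[simp] theorem tr_sub {a b : ℕ} (x y : V a) : tr a b (x - y) = tr a b x - tr a b y := by
  by_cases h : a = b
  · subst h; simp
  · simp [tr_eq_zero h]

@[simp] theorem tr_neg {a b : ℕ} (x : V a) : tr a b (-x) = -tr a b x := by
  by_cases h : a = b
  · subst h; simp
  · simp [tr_eq_zero h]

@[simp] theorem tr_zsmul {a b : ℕ} (c : ℤ) (x : V a) :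
    tr a b (c • x) = c • tr a b x := by
  by_cases h : a = b
  · subst h; simp
  · simp [tr_eq_zero h]

theorem tr_sum {a b : ℕ} {ι : Type*} (s : Finset ι) (f : ι → V a) :
    tr a b (∑ i ∈ s, f i) = ∑ i ∈ s, tr a b (f i) := by
  by_cases h : a = b
  · subst h; simp
  · simp [tr_eq_zero h]

end Base

namespace AddPlanarOperad

variable {V : ℕ → Type} [∀ n, AddCommGroup (V n)] (P : AddPlanarOperad V)

/-- Insertion as an additive map in the left variable. -/
def insL {m n : ℕ} (j : ℕ) (y : V n) : V m →+ V (m + n - 1) :=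
  AddMonoidHom.mk' (fun x => P.ins x j y) (fun a b => P.ins_add_left a b j y)

/-- Insertion as an additive map in the right variable. -/
def insR {m n : ℕ} (x : V m) (j : ℕ) : V n →+ V (m + n - 1) :=
  AddMonoidHom.mk' (fun y => P.ins x j y) (fun a b => P.ins_add_right x j a b)

@[simp] theorem insL_apply {m n : ℕ} (j : ℕ) (y : V n) (x : V m) :
    P.insL j y x = P.ins x j y := rfl

@[simp] theorem insR_apply {m n : ℕ} (x : V m) (j : ℕ) (y : V n) :
    P.insR x j y = P.ins x j y := rfl

@[simp] theorem ins_zero_left {m n : ℕ} (j : ℕ) (y : V n) :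
    P.ins (0 : V m) j y = 0 := map_zero (P.insL j y)

@[simp] theorem ins_zero_right {m n : ℕ} (x : V m) (j : ℕ) :
    P.ins x j (0 : V n) = 0 := map_zero (P.insR x j)

theorem ins_zsmul_left {m n : ℕ} (c : ℤ) (x : V m) (j : ℕ) (y : V n) :
    P.ins (c • x) j y = c • P.ins x j y := map_zsmul (P.insL j y) c x

theorem ins_zsmul_right {m n : ℕ} (x : V m) (j : ℕ) (c : ℤ) (y : V n) :
    P.ins x j (c • y) = c • P.ins x j y := map_zsmul (P.insR x j) c y

theorem ins_sub_right {m n : ℕ} (x : V m) (j : ℕ) (y y' : V n) :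
    P.ins x j (y - y') = P.ins x j y - P.ins x j y' := map_sub (P.insR x j) y y'

theorem ins_sum_left {m n : ℕ} {ι : Type*} (s : Finset ι) (f : ι → V m) (j : ℕ) (y : V n) :
    P.ins (∑ i ∈ s, f i) j y = ∑ i ∈ s, P.ins (f i) j y := map_sum (P.insL j y) f s

theorem ins_sum_right {m n : ℕ} {ι : Type*} (s : Finset ι) (x : V m) (j : ℕ) (f : ι → V n) :
    P.ins x j (∑ i ∈ s, f i) = ∑ i ∈ s, P.ins x j (f i) := map_sum (P.insR x j) f s

theorem ins_cst_left {m m' n : ℕ} (h : m = m') (h2 : m + n - 1 = m' + n - 1)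
    (x : V m) (j : ℕ) (y : V n) :
    P.ins (cst h x) j y = cst h2 (P.ins x j y) := by subst h; rfl

theorem ins_cst_right {m n n' : ℕ} (h : n = n') (h2 : m + n - 1 = m + n' - 1)
    (x : V m) (j : ℕ) (y : V n) :
    P.ins x j (cst h y) = cst h2 (P.ins x j y) := by subst h; rfl

theorem circ_def {m n : ℕ} (x : V m) (y : V n) :
    P.circ x y = ∑ i ∈ Finset.range m, ((-1 : ℤ) ^ ((n + 1) * i)) • P.ins x i y := rfl

@[simp] theorem circ_zero_left {m n : ℕ} (y : V n) :
    P.circ (0 : V m) y = 0 := by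
  simp [circ_def]

@[simp] theorem circ_zero_right {m n : ℕ} (x : V m) :
    P.circ x (0 : V n) = 0 := by
  simp [circ_def]

theorem circ_sub_right {m n : ℕ} (x : V m) (y y' : V n) :
    P.circ x (y - y') = P.circ x y - P.circ x y' := by
  simp [circ_def, ins_sub_right, smul_sub, Finset.sum_sub_distrib]

theorem circ_zsmul_right {m n : ℕ} (x : V m) (c : ℤ) (y : V n) :
    P.circ x (c • y) = c • P.circ x y := by
  simp [circ_def, ins_zsmul_right, Finset.smul_sum, smul_comm c]

theorem ins_sub_left {m n : ℕ} (x x' : V m) (j : ℕ) (y : V n) :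
    P.ins (x - x') j y = P.ins x j y - P.ins x' j y := map_sub (P.insL j y) x x'

theorem circ_sub_left {m n : ℕ} (x x' : V m) (y : V n) :
    P.circ (x - x') y = P.circ x y - P.circ x' y := by
  simp [circ_def, ins_sub_left, smul_sub, Finset.sum_sub_distrib]

theorem circ_zsmul_left {m n : ℕ} (c : ℤ) (x : V m) (y : V n) :
    P.circ (c • x) y = c • P.circ x y := by
  simp [circ_def, ins_zsmul_left, Finset.smul_sum, smul_comm c]

theorem circ_cst_left {m m' n : ℕ} (h : m = m') (h2 : m + n - 1 = m' + n - 1)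
    (x : V m) (y : V n) :
    P.circ (cst h x) y = cst h2 (P.circ x y) := by subst h; rfl

theorem circ_cst_right {m n n' : ℕ} (h : n = n') (h2 : m + n - 1 = m + n' - 1)
    (x : V m) (y : V n) :
    P.circ x (cst h y) = cst h2 (P.circ x y) := by subst h; rfl

theorem circ_left_of_deg_zero {n : ℕ} (x : V 0) (y : V n) : P.circ x y = 0 := by
  simp [circ_def]

end AddPlanarOperad

theorem jsgn_eq_negpow (n k : ℕ) : jsgn n k = (-1:ℤ)^((n+1)*(k+1)) := by
  unfold jsgn
  apply negpow_congr
  have h1 : ∀ a : ℕ, (((a:ℤ)) - 1).natAbs % 2 = (a + 1) % 2 := by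
    intro a
    rcases a with _|a
    · simp
    · rw [show ((a+1:ℕ):ℤ) - 1 = (a:ℤ) by push_cast; ring, Int.natAbs_natCast]
      omega
  rw [Int.natAbs_mul, Nat.mul_mod, h1, h1, ← Nat.mul_mod]

theorem jsgn_val (a b : ℕ) : jsgn a b = 1 ∨ jsgn a b = -1 := by
  rw [jsgn_eq_ite]; split <;> simp

theorem jsgn_split {m n k : ℕ} (h : 1 ≤ n + k) :
    jsgn m (n + k - 1) = jsgn m n * jsgn m k := by
  refine (jsgn_mul_jsgn ?_).symm
  rw [Nat.cast_sub h]
  push_cast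
  ring_nf
  simp

namespace AddPlanarOperad

variable {V : ℕ → Type} [∀ n, AddCommGroup (V n)] (P : AddPlanarOperad V)

theorem gbr_antisym {m n : ℕ} (x : V m) (y : V n) (h : n + m - 1 = m + n - 1) :
    P.gbr x y = -(jsgn m n • cst h (P.gbr y x)) := by
  rw [gbr, gbr, cst_sub, cst_zsmul, cst_cst, smul_sub, smul_smul,
    jsgn_comm n m, jsgn_mul_self, one_smul, cst_rfl, neg_sub]

end AddPlanarOperad

theorem range_split {W : Type*} [AddCommMonoid W] (f : ℕ → W) {m n i : ℕ}
    (hm : 1 ≤ m) (hi : i < m) :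
    ∑ j ∈ Finset.range (m + n - 1), f j
      = (∑ j ∈ Finset.range i, f j) + (∑ t ∈ Finset.range n, f (i + t))
        + (∑ p ∈ Finset.Ico (i + 1) m, f (p + n - 1)) := by
  have h1 := Finset.sum_Ico_consecutive f (show 0 ≤ i by omega) (show i ≤ i + n by omega)
  have h2 := Finset.sum_Ico_consecutive f (show 0 ≤ i + n by omega)
    (show i + n ≤ m + n - 1 by omega)
  have hfirst : ∑ j ∈ Finset.Ico 0 i, f j = ∑ j ∈ Finset.range i, f j := by
    rw [← Finset.range_eq_Ico]
  have hmid : ∑ j ∈ Finset.Ico i (i + n), f j = ∑ t ∈ Finset.range n, f (i + t) := by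
    rw [Finset.sum_Ico_eq_sum_range, Nat.add_sub_cancel_left]
  have hlast : ∑ j ∈ Finset.Ico (i + n) (m + n - 1), f j
      = ∑ p ∈ Finset.Ico (i + 1) m, f (p + n - 1) := by
    rw [Finset.sum_Ico_eq_sum_range, show m + n - 1 - (i + n) = m - (i + 1) by omega,
      Finset.sum_Ico_eq_sum_range]
    refine Finset.sum_congr rfl fun c _ => ?_
    rw [show i + 1 + c + n - 1 = i + n + c by omega]
  conv_lhs => rw [Finset.range_eq_Ico]
  rw [← h2, ← h1, hfirst, hmid, hlast]

namespace AddPlanarOperad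

variable {V : ℕ → Type} [∀ n, AddCommGroup (V n)] (P : AddPlanarOperad V)

/-- The "disjoint insertions" double sum appearing in the associator. -/
def Phi (N : ℕ) {m n k : ℕ} (x : V m) (y : V n) (z : V k) : V N :=
  ∑ v ∈ Finset.range m, ∑ u ∈ Finset.range v,
    ((-1:ℤ)^((k+1)*u) • (-1:ℤ)^((n+1)*v) •
        tr (m+k-1+n-1) N (P.ins (P.ins x u z) (v+k-1) y)
      + (-1:ℤ)^((k+1)*(v+n-1)) • (-1:ℤ)^((n+1)*u) •
        tr (m+k-1+n-1) N (P.ins (P.ins x v z) u y))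

theorem circ_circ_expand {N m n k : ℕ} (hm : 1 ≤ m) (hN : N = m + n + k - 2)
    (x : V m) (y : V n) (z : V k) :
    tr (m+n-1+k-1) N (P.circ (P.circ x y) z)
      = tr (m+(n+k-1)-1) N (P.circ x (P.circ y z)) + P.Phi N x y z := by
  have key : P.circ (P.circ x y) z
      = ∑ j ∈ Finset.range (m+n-1), ∑ i ∈ Finset.range m,
          (-1:ℤ)^((k+1)*j) • (-1:ℤ)^((n+1)*i) • P.ins (P.ins x i y) j z := by
    rw [circ_def]
    refine Finset.sum_congr rfl fun j hj => ?_
    conv_lhs => rw [circ_def]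
    rw [ins_sum_left, Finset.smul_sum]
    refine Finset.sum_congr rfl fun i hi => ?_
    rw [ins_zsmul_left]
  rw [key, tr_sum]
  simp only [tr_sum, tr_zsmul]
  rw [Finset.sum_comm]
  have splitted : ∀ i ∈ Finset.range m,
      (∑ j ∈ Finset.range (m+n-1), (-1:ℤ)^((k+1)*j) • (-1:ℤ)^((n+1)*i) •
          tr (m+n-1+k-1) N (P.ins (P.ins x i y) j z))
        = (∑ j ∈ Finset.range i, (-1:ℤ)^((k+1)*j) • (-1:ℤ)^((n+1)*i) •
            tr (m+n-1+k-1) N (P.ins (P.ins x i y) j z))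
          + (∑ t ∈ Finset.range n, (-1:ℤ)^((k+1)*(i+t)) • (-1:ℤ)^((n+1)*i) •
            tr (m+n-1+k-1) N (P.ins (P.ins x i y) (i+t) z))
          + (∑ p ∈ Finset.Ico (i+1) m, (-1:ℤ)^((k+1)*(p+n-1)) • (-1:ℤ)^((n+1)*i) •
            tr (m+n-1+k-1) N (P.ins (P.ins x i y) (p+n-1) z)) := fun i hi =>
    range_split _ hm (Finset.mem_range.1 hi)
  rw [Finset.sum_congr rfl splitted]
  rw [Finset.sum_add_distrib, Finset.sum_add_distrib]
  have hA : (∑ i ∈ Finset.range m, ∑ j ∈ Finset.range i,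
        (-1:ℤ)^((k+1)*j) • (-1:ℤ)^((n+1)*i) •
          tr (m+n-1+k-1) N (P.ins (P.ins x i y) j z))
      = ∑ v ∈ Finset.range m, ∑ u ∈ Finset.range v,
          (-1:ℤ)^((k+1)*u) • (-1:ℤ)^((n+1)*v) •
            tr (m+k-1+n-1) N (P.ins (P.ins x u z) (v+k-1) y) := by
    refine Finset.sum_congr rfl fun v hv => Finset.sum_congr rfl fun u hu => ?_
    rw [P.assoc_disjoint x y z v u (Finset.mem_range.1 hu) (Finset.mem_range.1 hv), tr_cst]
  have hB : (∑ i ∈ Finset.range m, ∑ t ∈ Finset.range n,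
        (-1:ℤ)^((k+1)*(i+t)) • (-1:ℤ)^((n+1)*i) •
          tr (m+n-1+k-1) N (P.ins (P.ins x i y) (i+t) z))
      = tr (m+(n+k-1)-1) N (P.circ x (P.circ y z)) := by
    conv_rhs => rw [circ_def]
    rw [tr_sum]
    refine Finset.sum_congr rfl fun i hi => ?_
    conv_rhs => rw [circ_def]
    rw [ins_sum_right]
    simp only [ins_zsmul_right, tr_zsmul, tr_sum, Finset.smul_sum]
    refine Finset.sum_congr rfl fun t ht => ?_
    rw [P.assoc_nested x y z i t (Finset.mem_range.1 hi) (Finset.mem_range.1 ht), tr_cst]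
    simp only [smul_smul]
    congr 1
    rw [← pow_add, ← pow_add]
    apply negpow_congr
    have ht' := Finset.mem_range.1 ht
    rw [show n + k - 1 + 1 = n + k by omega]
    ring_nf
    omega
  have hC : (∑ i ∈ Finset.range m, ∑ p ∈ Finset.Ico (i+1) m,
        (-1:ℤ)^((k+1)*(p+n-1)) • (-1:ℤ)^((n+1)*i) •
          tr (m+n-1+k-1) N (P.ins (P.ins x i y) (p+n-1) z))
      = ∑ v ∈ Finset.range m, ∑ u ∈ Finset.range v,
          (-1:ℤ)^((k+1)*(v+n-1)) • (-1:ℤ)^((n+1)*u) •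
            tr (m+k-1+n-1) N (P.ins (P.ins x v z) u y) := by
    rw [Finset.sum_comm' (s := Finset.range m) (t := fun i => Finset.Ico (i+1) m)
      (s' := fun p => Finset.range p) (t' := Finset.range m)
      (fun a b => by simp only [Finset.mem_range, Finset.mem_Ico]; omega)]
    refine Finset.sum_congr rfl fun p hp => Finset.sum_congr rfl fun i hi => ?_
    have e := P.assoc_disjoint x z y p i (Finset.mem_range.1 hi) (Finset.mem_range.1 hp)
    have e2 : tr (m+n-1+k-1) N (P.ins (P.ins x i y) (p+n-1) z)
        = tr (m+k-1+n-1) N (P.ins (P.ins x p z) i y) := by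
      rw [e, tr_cst]
    rw [e2]
  rw [hA, hB, hC, Phi]
  rw [show (∑ v ∈ Finset.range m, ∑ u ∈ Finset.range v,
      ((-1:ℤ)^((k+1)*u) • (-1:ℤ)^((n+1)*v) •
        tr (m+k-1+n-1) N (P.ins (P.ins x u z) (v+k-1) y)
      + (-1:ℤ)^((k+1)*(v+n-1)) • (-1:ℤ)^((n+1)*u) •
        tr (m+k-1+n-1) N (P.ins (P.ins x v z) u y)))
    = (∑ v ∈ Finset.range m, ∑ u ∈ Finset.range v,
        (-1:ℤ)^((k+1)*u) • (-1:ℤ)^((n+1)*v) •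
          tr (m+k-1+n-1) N (P.ins (P.ins x u z) (v+k-1) y))
      + (∑ v ∈ Finset.range m, ∑ u ∈ Finset.range v,
        (-1:ℤ)^((k+1)*(v+n-1)) • (-1:ℤ)^((n+1)*u) •
          tr (m+k-1+n-1) N (P.ins (P.ins x v z) u y)) from by
    simp only [Finset.sum_add_distrib]]
  abel

theorem phi_swap {N m n k : ℕ} (hm : 1 ≤ m) (hN : N = m + n + k - 2)
    (x : V m) (y : V n) (z : V k) :
    P.Phi N x y z = jsgn n k • P.Phi N x z y := by
  rw [Phi, Phi, Finset.smul_sum]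
  refine Finset.sum_congr rfl fun v hv => ?_
  rw [Finset.smul_sum]
  refine Finset.sum_congr rfl fun u hu => ?_
  have hv' := Finset.mem_range.1 hv
  have hu' := Finset.mem_range.1 hu
  rw [smul_add]
  have e1 := P.assoc_disjoint x y z v u hu' hv'
  have e2 := P.assoc_disjoint x z y v u hu' hv'
  have f1 : tr (m+n-1+k-1) N (P.ins (P.ins x v y) u z)
      = tr (m+k-1+n-1) N (P.ins (P.ins x u z) (v+k-1) y) := by rw [e1, tr_cst]
  have f2 : tr (m+k-1+n-1) N (P.ins (P.ins x v z) u y)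
      = tr (m+n-1+k-1) N (P.ins (P.ins x u y) (v+n-1) z) := by rw [e2, tr_cst]
  rw [f2, ← f1]
  obtain ⟨v', rfl⟩ : ∃ v', v = v' + 1 := ⟨v - 1, by omega⟩
  rw [add_comm]
  congr 1
  · simp only [smul_smul]
    congr 1
    rw [jsgn_eq_negpow, ← pow_add, ← pow_add, ← pow_add]
    apply negpow_congr
    simp only [show v' + 1 + k - 1 = v' + k from by omega,
      show v' + 1 + n - 1 = v' + n from by omega]
    ring_nf
    omega
  · simp only [smul_smul]
    congr 1
    rw [jsgn_eq_negpow, ← pow_add, ← pow_add, ← pow_add]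
    apply negpow_congr
    simp only [show v' + 1 + k - 1 = v' + k from by omega,
      show v' + 1 + n - 1 = v' + n from by omega]
    ring_nf
    omega

theorem assocSym {m n k : ℕ} (N : ℕ) (x : V m) (y : V n) (z : V k) :
    tr (m+(n+k-1)-1) N (P.circ x (P.circ y z)) - tr (m+n-1+k-1) N (P.circ (P.circ x y) z)
      = jsgn n k • (tr (m+(k+n-1)-1) N (P.circ x (P.circ z y))
          - tr (m+k-1+n-1) N (P.circ (P.circ x z) y)) := by
  rcases Nat.eq_zero_or_pos m with rfl|hm
  · simp [P.circ_left_of_deg_zero]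
  · by_cases hN : N = m + n + k - 2
    · rw [P.circ_circ_expand hm hN x y z,
        P.circ_circ_expand hm (by omega : N = m + k + n - 2) x z y,
        P.phi_swap hm hN x y z]
      rw [sub_add_cancel_left, sub_add_cancel_left, smul_neg]
    · have hz1 : tr (m+n-1+k-1) N (P.circ (P.circ x y) z) = 0 :=
        tr_eq_zero (by omega) _
      have hz2 : tr (m+k-1+n-1) N (P.circ (P.circ x z) y) = 0 :=
        tr_eq_zero (by omega) _
      rw [hz1, hz2]
      by_cases hnk : n + k = 0
      · obtain ⟨hn, hk⟩ : n = 0 ∧ k = 0 := by omega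
        subst hn; subst hk
        simp [P.circ_left_of_deg_zero]
      · rw [tr_eq_zero (by omega), tr_eq_zero (by omega)]
        simp

end AddPlanarOperad

namespace AddPlanarOperad

variable {V : ℕ → Type} [∀ n, AddCommGroup (V n)] (P : AddPlanarOperad V)

theorem tr_circ_gbr_right {m n k : ℕ} (N : ℕ) (x : V m) (y : V n) (z : V k) :
    tr (m+(n+k-1)-1) N (P.circ x (P.gbr y z))
      = tr (m+(n+k-1)-1) N (P.circ x (P.circ y z))
        - jsgn n k • tr (m+(k+n-1)-1) N (P.circ x (P.circ z y)) := by
  have h1 : k + n - 1 = n + k - 1 := by omega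
  have h2 : m + (k+n-1) - 1 = m + (n+k-1) - 1 := by omega
  rw [gbr, P.circ_sub_right, P.circ_zsmul_right, P.circ_cst_right h1 h2,
    tr_sub, tr_zsmul, tr_cst]

theorem tr_circ_gbr_left {m n k : ℕ} (N : ℕ) (x : V m) (y : V n) (z : V k) :
    tr (n+k-1+m-1) N (P.circ (P.gbr y z) x)
      = tr (n+k-1+m-1) N (P.circ (P.circ y z) x)
        - jsgn n k • tr (k+n-1+m-1) N (P.circ (P.circ z y) x) := by
  have h1 : k + n - 1 = n + k - 1 := by omega
  have h3 : k+n-1+m-1 = n+k-1+m-1 := by omega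
  rw [gbr, P.circ_sub_left, P.circ_zsmul_left, P.circ_cst_left h1 h3,
    tr_sub, tr_zsmul, tr_cst]

theorem tr_gbr_gbr {m n k : ℕ} (N : ℕ) (x : V m) (y : V n) (z : V k) :
    tr (m+(n+k-1)-1) N (P.gbr x (P.gbr y z))
      = tr (m+(n+k-1)-1) N (P.circ x (P.circ y z))
        - jsgn n k • tr (m+(k+n-1)-1) N (P.circ x (P.circ z y))
        - jsgn m (n+k-1) • (tr (n+k-1+m-1) N (P.circ (P.circ y z) x)
            - jsgn n k • tr (k+n-1+m-1) N (P.circ (P.circ z y) x)) := by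
  rw [gbr, tr_sub, tr_zsmul, tr_cst, tr_circ_gbr_right, tr_circ_gbr_left]

end AddPlanarOperad

/-- for a planar operad `V` in abelian groups, the graded abelian
group `⊕ₙ V(n)` (with `V(n)` in degree `n+1`) equipped with
`[x,y] = x∘y − (−1)^{(m−1)(n−1)} y∘x` is a graded Lie algebra: graded
antisymmetry and the graded Jacobi identity hold.
(The map `tr` transports along an equality of degrees, and is `0` in the
degenerate truncated cases, where all the bracket terms vanish anyway.) -/
theorem graded_lie_of_preLie (V : ℕ → Type) [∀ n, AddCommGroup (V n)]
    (P : AddPlanarOperad V) :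
    (∀ (m n : ℕ) (x : V m) (y : V n),
      P.gbr x y = -(jsgn m n • cst (by omega) (P.gbr y x))) ∧
    (∀ (m n k : ℕ) (x : V m) (y : V n) (z : V k),
      tr (m + (n + k - 1) - 1) (m + n + k - 2) (jsgn m k • P.gbr x (P.gbr y z)) +
      tr (n + (k + m - 1) - 1) (m + n + k - 2) (jsgn n m • P.gbr y (P.gbr z x)) +
      tr (k + (m + n - 1) - 1) (m + n + k - 2) (jsgn k n • P.gbr z (P.gbr x y)) = 0) := by
  constructor
  · intro m n x y
    exact P.gbr_antisym x y _
  · intro m n k x y z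
    rw [tr_zsmul, tr_zsmul, tr_zsmul,
      P.tr_gbr_gbr (m+n+k-2) x y z, P.tr_gbr_gbr (m+n+k-2) y z x,
      P.tr_gbr_gbr (m+n+k-2) z x y]
    have R1 := P.assocSym (m+n+k-2) x y z
    have R2 := P.assocSym (m+n+k-2) y z x
    have R3 := P.assocSym (m+n+k-2) z x y
    by_cases hnk : n + k = 0
    · obtain ⟨rfl, rfl⟩ : n = 0 ∧ k = 0 := by omega
      simp only [P.circ_left_of_deg_zero, P.circ_zero_left, P.circ_zero_right, tr_zero,
        smul_zero, sub_zero, zero_sub, smul_neg, neg_zero, add_zero, zero_add,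
        neg_neg] at R1 R2 R3 ⊢
      have hB := neg_inj.mp R1
      rw [hB]
      match_scalars
      rcases jsgn_val 0 m with h1|h1 <;> rcases jsgn_val 0 (m-1) with h2|h2 <;>
        rw [show jsgn 0 0 = -1 from by decide, h1, h2] <;> norm_num
    · by_cases hkm : k + m = 0
      · obtain ⟨rfl, rfl⟩ : k = 0 ∧ m = 0 := by omega
        simp only [P.circ_left_of_deg_zero, P.circ_zero_left, P.circ_zero_right, tr_zero,
          smul_zero, sub_zero, zero_sub, smul_neg, neg_zero, add_zero, zero_add,
          neg_neg] at R1 R2 R3 ⊢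
        have hB := neg_inj.mp R2
        rw [hB]
        match_scalars
        rcases jsgn_val 0 n with h1|h1 <;> rcases jsgn_val 0 (n-1) with h2|h2 <;>
          rw [show jsgn 0 0 = -1 from by decide, h1, h2] <;> norm_num
      · by_cases hmn : m + n = 0
        · obtain ⟨rfl, rfl⟩ : m = 0 ∧ n = 0 := by omega
          simp only [P.circ_left_of_deg_zero, P.circ_zero_left, P.circ_zero_right, tr_zero,
            smul_zero, sub_zero, zero_sub, smul_neg, neg_zero, add_zero, zero_add,
            neg_neg] at R1 R2 R3 ⊢
          have hB := neg_inj.mp R3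
          rw [hB]
          match_scalars
          rcases jsgn_val 0 k with h1|h1 <;> rcases jsgn_val 0 (k-1) with h2|h2 <;>
            rw [show jsgn 0 0 = -1 from by decide, h1, h2] <;> norm_num
        · rw [jsgn_comm k m] at R2
          rw [jsgn_split (show 1 ≤ n+k by omega), jsgn_split (show 1 ≤ k+m by omega),
            jsgn_split (show 1 ≤ m+n by omega), jsgn_comm n m, jsgn_comm k m, jsgn_comm k n]
          have Z1 := eq_add_of_sub_eq R1
          have Z2 := eq_add_of_sub_eq R2
          have Z3 := eq_add_of_sub_eq R3
          rcases jsgn_val m n with h1|h1 <;> rcases jsgn_val n k with h2|h2 <;>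
            rcases jsgn_val m k with h3|h3 <;>
            simp only [h1, h2, h3] at Z1 Z2 Z3 ⊢ <;>
            rw [Z1, Z2, Z3] <;>
            simp only [one_smul, neg_one_smul, neg_neg, smul_sub, smul_add, smul_neg] <;>
            abel
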